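/- For any two stochastic policies π and π' on a finite aperiodic unichain MDP, ρ(π') − ρ(π) ≥ E_{s∼d_π, a∼π'}[Ā^π(s,a)] − 2ζ*·max_s E_{a∼π'}|Ā^π(s,a)|·E_{s∼d_π}[D_TV(π'∥π)[s]], where ζ* = max_π ‖(I − P_π + P*_π)^{-1}‖_∞. -/

import Mathlib

open Finset

/-- A stochastic policy. -/
def IsPolicy {S A : Type*} [Fintype A] (π : S → A → ℝ) : Prop :=
  (∀ s a, 0 ≤ π s a) ∧ ∀ s, ∑ a, π s a = 1

/-- State transition matrix induced by policy π. -/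
def inducedMatrix {S A : Type*} [Fintype A] (P : S → A → S → ℝ) (π : S → A → ℝ) :
    Matrix S S ℝ :=
  Matrix.of fun s s' => ∑ a, π s a * P s a s'

/-- Stationary distribution of the chain induced by a policy (unichain case). -/
def IsStationaryPolicy {S A : Type*} [Fintype S] [Fintype A]
    (P : S → A → S → ℝ) (π : S → A → ℝ) (d : S → ℝ) : Prop :=
  (∀ s, 0 ≤ d s) ∧ (∑ s, d s = 1) ∧
    ∀ s', ∑ s, d s * ∑ a, π s a * P s a s' = d s'

/-- ∞-operator norm of the fundamental matrix Z^π = (I − P_π + P*_π)⁻¹. -/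
noncomputable def fundNorm {S : Type*} [Fintype S] [DecidableEq S] [Nonempty S]
    (Pm : Matrix S S ℝ) (d : S → ℝ) : ℝ :=
  Finset.univ.sup' Finset.univ_nonempty
    (fun s => ∑ s', |((1 - Pm + (Matrix.of fun _ j => d j) : Matrix S S ℝ)⁻¹) s s'|)

/-! Write `f s = E_{a∼π'} Ā^π(s,a)`. Summing the Bellman equation of `π` against the stationary
distribution of `π'` telescopes `V`, leaving `ρ(π') − ρ(π) = d_{π'} ⬝ᵥ f`. Averaging `f` over `d_π`
instead makes the error `(d_{π'} − d_π) ⬝ᵥ f`. Since `d_{π'} − d_π` has total mass zero, the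
rank-one part `P*_{π'}` kills it, so multiplying by `I − P_{π'} + P*_{π'}` gives
`d_π (P_{π'} − P_π)`; hence `d_{π'} − d_π = d_π (P_{π'} − P_π) Z^{π'}`. The error is then bounded
through `‖d_π (P_{π'} − P_π)‖₁ ≤ 2 E_{d_π}[D_TV(π'‖π)]`, `‖Z^{π'}‖_∞ ≤ ζ*` and
`‖f‖_∞ ≤ max_s E_{π'}|Ā^π|`. -/

open Matrix

section

variable {S : Type*} [Fintype S]

theorem abs_dotProduct_le_of_abs_le {v w : S → ℝ} {c : ℝ} (hw : ∀ i, |w i| ≤ c) :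
    |v ⬝ᵥ w| ≤ (∑ i, |v i|) * c :=
  calc |v ⬝ᵥ w| ≤ ∑ i, |v i * w i| := abs_sum_le_sum_abs _ _
    _ ≤ ∑ i, |v i| * c := by
      gcongr with i
      rw [abs_mul]
      exact mul_le_mul_of_nonneg_left (hw i) (abs_nonneg _)
    _ = (∑ i, |v i|) * c := (sum_mul _ _ _).symm

theorem abs_vecMul_dotProduct_le [Nonempty S] {v f : S → ℝ} {Z : Matrix S S ℝ} {b z c : ℝ}
    (hv : ∑ t, |v t| ≤ b) (hZ : ∀ t, ∑ s, |Z t s| ≤ z) (hf : ∀ s, |f s| ≤ c) :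
    |(v ᵥ* Z) ⬝ᵥ f| ≤ b * z * c := by
  obtain ⟨s₀⟩ := ‹Nonempty S›
  have hc : 0 ≤ c := (abs_nonneg _).trans (hf s₀)
  have hz : 0 ≤ z := (sum_nonneg fun s _ => abs_nonneg (Z s₀ s)).trans (hZ s₀)
  have hZf : ∀ t, |(Z *ᵥ f) t| ≤ z * c := fun t =>
    (abs_dotProduct_le_of_abs_le hf).trans (mul_le_mul_of_nonneg_right (hZ t) hc)
  rw [← dotProduct_mulVec, mul_assoc]
  exact (abs_dotProduct_le_of_abs_le hZf).trans
    (mul_le_mul_of_nonneg_right hv (mul_nonneg hz hc))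

theorem sum_abs_vecMul_le (v : S → ℝ) (M : Matrix S S ℝ) :
    ∑ t, |(v ᵥ* M) t| ≤ ∑ s, |v s| * ∑ t, |M s t| :=
  calc ∑ t, |(v ᵥ* M) t| ≤ ∑ t, ∑ s, |v s| * |M s t| := by
        gcongr with t
        exact (abs_sum_le_sum_abs _ _).trans_eq (by simp only [abs_mul])
    _ = ∑ s, |v s| * ∑ t, |M s t| := by
        rw [sum_comm]
        simp only [mul_sum]

theorem sub_eq_vecMul_inv_of_stationary [DecidableEq S] {Q : Matrix S S ℝ} {d d' : S → ℝ}
    (hd' : d' ᵥ* Q = d') (hsum : ∑ s, d s = ∑ s, d' s)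
    (hM : IsUnit (1 - Q + of fun _ j => d' j)) :
    d' - d = (d ᵥ* Q - d) ᵥ* (1 - Q + of fun _ j => d' j)⁻¹ := by
  have hrank_one : (d' - d) ᵥ* (of fun _ j => d' j : Matrix S S ℝ) = 0 := by
    ext j
    simp only [vecMul, dotProduct, of_apply, ← sum_mul, Pi.sub_apply, sum_sub_distrib, hsum,
      sub_self, zero_mul, Pi.zero_apply]
  have hmul : (d' - d) ᵥ* (1 - Q + of fun _ j => d' j) = d ᵥ* Q - d := by
    rw [vecMul_add, hrank_one, vecMul_sub, vecMul_one, sub_vecMul, hd']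
    abel
  rw [← hmul, vecMul_vecMul, mul_nonsing_inv _ ((isUnit_iff_isUnit_det _).mp hM), vecMul_one]

end

section

variable {S A : Type*} [Fintype A] {P : S → A → S → ℝ}

theorem inducedMatrix_sub (π π' : S → A → ℝ) :
    inducedMatrix P π' - inducedMatrix P π = inducedMatrix P (π' - π) := by
  ext s t
  simp only [inducedMatrix, Matrix.sub_apply, of_apply, Pi.sub_apply, sub_mul, sum_sub_distrib]

variable [Fintype S]

theorem IsStationaryPolicy.vecMul_inducedMatrix {π : S → A → ℝ} {d : S → ℝ}
    (h : IsStationaryPolicy P π d) : d ᵥ* inducedMatrix P π = d :=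
  funext h.2.2

theorem inducedMatrix_mulVec_apply (π : S → A → ℝ) (V : S → ℝ) (s : S) :
    (inducedMatrix P π *ᵥ V) s = ∑ a, π s a * ∑ t, P s a t * V t := by
  simp only [mulVec, dotProduct, inducedMatrix, of_apply, sum_mul, mul_sum, mul_assoc]
  exact sum_comm

theorem sum_abs_inducedMatrix_le (hP₀ : ∀ s a t, 0 ≤ P s a t) (hP₁ : ∀ s a, ∑ t, P s a t = 1)
    (q : S → A → ℝ) (s : S) : ∑ t, |inducedMatrix P q s t| ≤ ∑ a, |q s a| :=
  calc ∑ t, |inducedMatrix P q s t| ≤ ∑ t, ∑ a, |q s a| * P s a t := by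
        gcongr with t
        refine (abs_sum_le_sum_abs _ _).trans_eq (sum_congr rfl fun a _ => ?_)
        rw [abs_mul, abs_of_nonneg (hP₀ s a t)]
    _ = ∑ a, |q s a| := by
        rw [sum_comm]
        simp only [← mul_sum, hP₁, mul_one]

theorem performance_difference {π : S → A → ℝ} {d : S → ℝ} (hπ : ∀ s, ∑ a, π s a = 1)
    (hd₁ : ∑ s, d s = 1) (hd : d ᵥ* inducedMatrix P π = d) {r Ab : S → A → ℝ} {ρ : ℝ}
    {V : S → ℝ} (hAb : ∀ s a, Ab s a = r s a - ρ + ∑ t, P s a t * V t - V s) :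
    ∑ s, d s * ∑ a, π s a * Ab s a = ∑ s, d s * ∑ a, π s a * r s a - ρ := by
  have hrow : ∀ s, ∑ a, π s a * Ab s a
      = ∑ a, π s a * r s a - ρ + (inducedMatrix P π *ᵥ V) s - V s := by
    intro s
    simp only [hAb, mul_sub, mul_add, sum_sub_distrib, sum_add_distrib, ← sum_mul, hπ, one_mul,
      inducedMatrix_mulVec_apply]
  calc ∑ s, d s * ∑ a, π s a * Ab s a
      = ∑ s, d s * ∑ a, π s a * r s a - (∑ s, d s) * ρ
          + d ⬝ᵥ (inducedMatrix P π *ᵥ V) - d ⬝ᵥ V := by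
        simp only [hrow, mul_sub, mul_add, sum_sub_distrib, sum_add_distrib, sum_mul, dotProduct]
    _ = ∑ s, d s * ∑ a, π s a * r s a - ρ := by
        rw [dotProduct_mulVec, hd, hd₁]
        ring

end

theorem avg_reward_policy_improvement_bound_unichain_general
    {S A : Type*} [Fintype S] [Fintype A] [DecidableEq S] [Nonempty S]
    (P : S → A → S → ℝ) (r : S → A → ℝ)
    (hP_nonneg : ∀ s a s', 0 ≤ P s a s') (hP_sum : ∀ s a, ∑ s', P s a s' = 1)
    (π π' : S → A → ℝ) (hπ' : IsPolicy π')
    (dπ dπ' : S → ℝ)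
    (hd : IsStationaryPolicy P π dπ) (hd' : IsStationaryPolicy P π' dπ')
    -- fundamental matrices exist (aperiodic unichain)
    (hZ : ∀ p d, IsPolicy p → IsStationaryPolicy P p d →
      IsUnit (1 - inducedMatrix P p + Matrix.of fun _ s' => d s' : Matrix S S ℝ))
    -- average rewards
    (ρπ ρπ' : ℝ)
    (hρ' : ρπ' = ∑ s, dπ' s * ∑ a, π' s a * r s a)
    -- bias, action-bias and advantage functions of π
    (Vb : S → ℝ) (Qb Ab : S → A → ℝ)
    (hBellman : ∀ s a, Qb s a = r s a - ρπ + ∑ s', P s a s' * Vb s')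
    (hAdv : ∀ s a, Ab s a = Qb s a - Vb s)
    -- ζ* = max_π ‖Z^π‖_∞ over stationary policies
    (ζstar : ℝ)
    (hζ_ub : ∀ p d, IsPolicy p → IsStationaryPolicy P p d →
      fundNorm (inducedMatrix P p) d ≤ ζstar) :
    ρπ' - ρπ ≥ (∑ s, dπ s * ∑ a, π' s a * Ab s a) -
        2 * ζstar *
          (Finset.univ.sup' Finset.univ_nonempty (fun s => ∑ a, π' s a * |Ab s a|)) *
          ∑ s, dπ s * ((1 / 2) * ∑ a, |π' s a - π s a|) := by
  set f : S → ℝ := fun s => ∑ a, π' s a * Ab s a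
  set M : Matrix S S ℝ := 1 - inducedMatrix P π' + of fun _ j => dπ' j
  have hAb : ∀ s a, Ab s a = r s a - ρπ + ∑ t, P s a t * Vb t - Vb s := fun s a => by
    rw [hAdv, hBellman]
  have hgain : ρπ' - ρπ = dπ' ⬝ᵥ f := by
    rw [hρ', dotProduct, performance_difference hπ'.2 hd'.2.1 hd'.vecMul_inducedMatrix hAb]
  have hshift : dπ' - dπ = (dπ ᵥ* inducedMatrix P (π' - π)) ᵥ* M⁻¹ := by
    rw [← inducedMatrix_sub, vecMul_sub, hd.vecMul_inducedMatrix]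
    exact sub_eq_vecMul_inv_of_stationary hd'.vecMul_inducedMatrix (hd.2.1.trans hd'.2.1.symm)
      (hZ π' dπ' hπ' hd')
  have hdrift : ∑ t, |(dπ ᵥ* inducedMatrix P (π' - π)) t|
      ≤ ∑ s, dπ s * ∑ a, |π' s a - π s a| := by
    refine (sum_abs_vecMul_le _ _).trans (sum_le_sum fun s _ => ?_)
    rw [abs_of_nonneg (hd.1 s)]
    exact mul_le_mul_of_nonneg_left (sum_abs_inducedMatrix_le hP_nonneg hP_sum _ s) (hd.1 s)
  have hrow : ∀ t, ∑ s, |M⁻¹ t s| ≤ ζstar := fun t =>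
    (le_sup' (fun t => ∑ s, |M⁻¹ t s|) (mem_univ t)).trans (hζ_ub π' dπ' hπ' hd')
  have hf : ∀ s, |f s| ≤ univ.sup' univ_nonempty (fun s => ∑ a, π' s a * |Ab s a|) := by
    refine fun s => le_trans ?_ (le_sup' (fun s => ∑ a, π' s a * |Ab s a|) (mem_univ s))
    refine (abs_sum_le_sum_abs _ _).trans_eq (sum_congr rfl fun a _ => ?_)
    rw [abs_mul, abs_of_nonneg (hπ'.1 s a)]
  have key := abs_vecMul_dotProduct_le hdrift hrow hf
  rw [← hshift, sub_dotProduct, ← hgain] at key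
  have hhalf : ∑ s, dπ s * ((1 / 2) * ∑ a, |π' s a - π s a|)
      = (1 / 2) * ∑ s, dπ s * ∑ a, |π' s a - π s a| := by
    rw [mul_sum]
    exact sum_congr rfl fun s _ => by ring
  have hf_avg : (∑ s, dπ s * ∑ a, π' s a * Ab s a) = dπ ⬝ᵥ f := rfl
  rw [hhalf, hf_avg]
  linarith [(abs_le.mp key).1]

/-- aperiodic unichain case:
ρ(π') − ρ(π) ≥ E_{s∼d_π, a∼π'}[Ā^π(s,a)]
  − 2ζ*·max_s E_{a∼π'}|Ā^π(s,a)|·E_{s∼d_π}[D_TV(π'∥π)[s]],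
where ζ* = max_π ‖(I − P_π + P*_π)⁻¹‖_∞. -/
theorem avg_reward_policy_improvement_bound_unichain
    {S A : Type*} [Fintype S] [Fintype A] [DecidableEq S] [Nonempty S]
    (P : S → A → S → ℝ) (r : S → A → ℝ)
    (hP_nonneg : ∀ s a s', 0 ≤ P s a s') (hP_sum : ∀ s a, ∑ s', P s a s' = 1)
    (π π' : S → A → ℝ) (hπ : IsPolicy π) (hπ' : IsPolicy π')
    (dπ dπ' : S → ℝ)
    (hd : IsStationaryPolicy P π dπ) (hd' : IsStationaryPolicy P π' dπ')
    -- fundamental matrices exist (aperiodic unichain)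
    (hZ : ∀ p d, IsPolicy p → IsStationaryPolicy P p d →
      IsUnit (1 - inducedMatrix P p + Matrix.of fun _ s' => d s' : Matrix S S ℝ))
    -- average rewards
    (ρπ ρπ' : ℝ)
    (hρ : ρπ = ∑ s, dπ s * ∑ a, π s a * r s a)
    (hρ' : ρπ' = ∑ s, dπ' s * ∑ a, π' s a * r s a)
    -- bias, action-bias and advantage functions of π
    (Vb : S → ℝ) (Qb Ab : S → A → ℝ)
    (hBellman : ∀ s a, Qb s a = r s a - ρπ + ∑ s', P s a s' * Vb s')
    (hAdv : ∀ s a, Ab s a = Qb s a - Vb s)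
    -- ζ* = max_π ‖Z^π‖_∞ over stationary policies
    (ζstar : ℝ)
    (hζ_ub : ∀ p d, IsPolicy p → IsStationaryPolicy P p d →
      fundNorm (inducedMatrix P p) d ≤ ζstar)
    (hζ_mem : ∃ p d, IsPolicy p ∧ IsStationaryPolicy P p d ∧
      fundNorm (inducedMatrix P p) d = ζstar) :
    ρπ' - ρπ ≥ (∑ s, dπ s * ∑ a, π' s a * Ab s a) -
        2 * ζstar *
          (Finset.univ.sup' Finset.univ_nonempty (fun s => ∑ a, π' s a * |Ab s a|)) *
          ∑ s, dπ s * ((1 / 2) * ∑ a, |π' s a - π s a|) :=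
  avg_reward_policy_improvement_bound_unichain_general P r hP_nonneg hP_sum π π' hπ' dπ dπ' hd hd'
    hZ ρπ ρπ' hρ' Vb Qb Ab hBellman hAdv ζstar hζ_ub
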